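/- Let G be the graph on ℤ⁴ where x ~ y iff x − y or y − x belongs to the set S = {(1,1,1,1), (1,0,0,0), (0,1,0,0), (0,0,1,0), (0,0,0,1), (1,0,−1,0), (0,1,0,−1)}. Then the map f : ℤ⁴ → ℤ/4ℤ given by f(a,b,c,d) = a + 3b + 2c + d mod 4 is a proper 4-coloring of G. -/
import Mathlib


def colF (v : Fin 4 → ℤ) : ZMod 4 := (v 0 : ZMod 4) + 3 * (v 1 : ZMod 4) + 2 * (v 2 : ZMod 4) + (v 3 : ZMod 4)

def connSet : Set (Fin 4 → ℤ) :=
  {![1,1,1,1], ![1,0,0,0], ![0,1,0,0], ![0,0,1,0], ![0,0,0,1], ![1,0,-1,0], ![0,1,0,-1]}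

def G : SimpleGraph (Fin 4 → ℤ) := SimpleGraph.fromRel (fun x y => x - y ∈ connSet)

lemma colF_sub (x y : Fin 4 → ℤ) : colF (x - y) = colF x - colF y := by
  simp only [colF, Pi.sub_apply, Int.cast_sub]
  ring

lemma colF_ne_zero_of_mem {s : Fin 4 → ℤ} (hs : s ∈ connSet) : colF s ≠ 0 := by
  rcases hs with h | h | h | h | h | h | h <;> subst h <;> decide

theorem stmt5 : ∀ x y : Fin 4 → ℤ, G.Adj x y → colF x ≠ colF y := by
  intro x y h
  obtain ⟨-, h | h⟩ := h
  · have := colF_ne_zero_of_mem h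
    rw [colF_sub] at this
    intro heq; exact this (by rw [heq]; ring)
  · have := colF_ne_zero_of_mem h
    rw [colF_sub] at this
    intro heq; exact this (by rw [heq]; ring)
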